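/- arXiv:2412.17962 — 2 statements merged into one kernel-verified Lean document; each statement's English description precedes it below -/
import Mathlib

section
/- For p >= 2, a graph G on n vertices is a nontrivial uniquely B_p-saturated graph with girth 4 if and only if G is a strongly regular graph with parameters (n, k, 0, p) for some k. -/
open SimpleGraph

/-- The diamond graph `C₄⁺`: a `4`-cycle with one chord, i.e. `K₄` minus an edge. -/
def diamond : SimpleGraph (Fin 4) := (⊤ : SimpleGraph (Fin 4)).deleteEdges {s(0, 1)}

/-- `G'` is a copy of `H` in `G`, i.e. a subgraph of `G` isomorphic to `H`. -/
def IsCopy {W V : Type*} (H : SimpleGraph W) {G : SimpleGraph V} (G' : G.Subgraph) : Prop :=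
  Nonempty (G'.coe ≃g H)

/-- `G` is uniquely `H`-saturated: `G` is `H`-free, and adding any non-edge
creates exactly one copy of `H`. -/
def UniquelySaturated {W V : Type*} (H : SimpleGraph W) (G : SimpleGraph V) : Prop :=
  (∀ G' : G.Subgraph, ¬ IsCopy H G') ∧
    ∀ u v : V, u ≠ v → ¬ G.Adj u v →
      ∃! G' : (G ⊔ SimpleGraph.fromEdgeSet {s(u, v)}).Subgraph, IsCopy H G'

/-- The book graph `B_p`: `p` triangles sharing a common edge. The common (rootlet)
edge joins vertices `0` and `1`, and the `p` page vertices are joined to both. -/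
def book (p : ℕ) : SimpleGraph (Fin (p + 2)) :=
  SimpleGraph.fromRel fun u v => u.val < 2 ∨ v.val < 2

namespace Stmt16Aux


variable {V : Type*}

lemma book_adj {p : ℕ} (i j : Fin (p+2)) :
    (book p).Adj i j ↔ i ≠ j ∧ (i.val < 2 ∨ j.val < 2) := by
  rw [book, fromRel_adj]; tauto

def TriFree (G : SimpleGraph V) : Prop :=
  ∀ x y z : V, G.Adj x y → G.Adj x z → G.Adj y z → False

def theCopy (G : SimpleGraph V) (u v : V) (S : Set V) :
    (G ⊔ fromEdgeSet {s(u,v)}).Subgraph :=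
  (⊤ : (G ⊔ fromEdgeSet {s(u,v)}).Subgraph).induce (insert u (insert v S))

lemma theCopy_verts (G : SimpleGraph V) (u v : V) (S : Set V) :
    (theCopy G u v S).verts = insert u (insert v S) := rfl

lemma theCopy_adj (G : SimpleGraph V) (u v : V) (S : Set V) (x y : V) :
    (theCopy G u v S).Adj x y ↔
      x ∈ insert u (insert v S) ∧ y ∈ insert u (insert v S) ∧
        (G ⊔ fromEdgeSet {s(u,v)}).Adj x y := by
  rw [theCopy, Subgraph.induce_adj]
  simp

/-- the standard vertex labelling of a potential book copy -/
def pageMap (u v : V) {p : ℕ} (S : Finset V) (g : Fin p ≃ {x // x ∈ S})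
    (i : Fin (p+2)) : V :=
  if i.val = 0 then u else if i.val = 1 then v
  else if h : i.val - 2 < p then ↑(g ⟨i.val - 2, h⟩) else u

lemma pageMap_zero (u v : V) {p : ℕ} (S : Finset V) (g : Fin p ≃ {x // x ∈ S})
    {i : Fin (p+2)} (h : i.val = 0) : pageMap u v S g i = u := by
  rw [pageMap, if_pos h]

lemma pageMap_one (u v : V) {p : ℕ} (S : Finset V) (g : Fin p ≃ {x // x ∈ S})
    {i : Fin (p+2)} (h : i.val = 1) : pageMap u v S g i = v := by
  rw [pageMap, if_neg (by omega), if_pos h]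

lemma pageMap_big (u v : V) {p : ℕ} (S : Finset V) (g : Fin p ≃ {x // x ∈ S})
    {i : Fin (p+2)} (h : 2 ≤ i.val) :
    pageMap u v S g i = ↑(g ⟨i.val - 2, by omega⟩) := by
  have hb : i.val - 2 < p := by omega
  rw [pageMap, if_neg (by omega), if_neg (by omega), dif_pos hb]

lemma pageMap_mem_S (u v : V) {p : ℕ} (S : Finset V) (g : Fin p ≃ {x // x ∈ S})
    {i : Fin (p+2)} (h : 2 ≤ i.val) : pageMap u v S g i ∈ S := by
  rw [pageMap_big u v S g h]; exact (g _).2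

section main
variable {G : SimpleGraph V} {u v : V} {p : ℕ} {S : Finset V}

lemma pageMap_inj (hne : u ≠ v) (huS : u ∉ S) (hvS : v ∉ S)
    (g : Fin p ≃ {x // x ∈ S}) : Function.Injective (pageMap u v S g) := by
  intro i j hij
  rcases Nat.lt_or_ge i.val 2 with hi | hi
  · rcases Nat.lt_or_ge j.val 2 with hj | hj
    · have hi' : i.val = 0 ∨ i.val = 1 := by omega
      have hj' : j.val = 0 ∨ j.val = 1 := by omega
      rcases hi' with hi' | hi' <;> rcases hj' with hj' | hj'
      · exact Fin.ext (by omega)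
      · rw [pageMap_zero u v S g hi', pageMap_one u v S g hj'] at hij
        exact absurd hij hne
      · rw [pageMap_one u v S g hi', pageMap_zero u v S g hj'] at hij
        exact absurd hij.symm hne
      · exact Fin.ext (by omega)
    · exfalso
      have hj2 := pageMap_mem_S u v S g hj
      rw [← hij] at hj2
      have hi' : i.val = 0 ∨ i.val = 1 := by omega
      rcases hi' with hi' | hi'
      · rw [pageMap_zero u v S g hi'] at hj2; exact huS hj2
      · rw [pageMap_one u v S g hi'] at hj2; exact hvS hj2
  · rcases Nat.lt_or_ge j.val 2 with hj | hj
    · exfalso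
      have hi2 := pageMap_mem_S u v S g hi
      rw [hij] at hi2
      have hj' : j.val = 0 ∨ j.val = 1 := by omega
      rcases hj' with hj' | hj'
      · rw [pageMap_zero u v S g hj'] at hi2; exact huS hi2
      · rw [pageMap_one u v S g hj'] at hi2; exact hvS hi2
    · rw [pageMap_big u v S g hi, pageMap_big u v S g hj] at hij
      have h2 : i.val - 2 = j.val - 2 :=
        congrArg Fin.val (g.injective (Subtype.ext hij))
      exact Fin.ext (by omega)

lemma pageMap_surj (g : Fin p ≃ {x // x ∈ S}) {x : V}
    (hx : x ∈ insert u (insert v (↑S : Set V))) :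
    ∃ i : Fin (p+2), pageMap u v S g i = x := by
  rcases hx with rfl | hx
  · exact ⟨⟨0, by omega⟩, pageMap_zero _ _ _ _ rfl⟩
  rcases hx with rfl | hx
  · exact ⟨⟨1, by omega⟩, pageMap_one _ _ _ _ rfl⟩
  · have hx' : x ∈ S := by simpa using hx
    refine ⟨⟨(g.symm ⟨x, hx'⟩).val + 2, by omega⟩, ?_⟩
    rw [pageMap_big u v S g (by simp)]
    have h2 : (⟨(g.symm ⟨x, hx'⟩).val + 2 - 2, by omega⟩ : Fin p) = g.symm ⟨x, hx'⟩ :=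
      Fin.ext (by simp)
    rw [h2, g.apply_symm_apply]

lemma pageMap_adj (hG : TriFree G) (hne : u ≠ v)
    (hcn : ∀ w ∈ S, G.Adj u w ∧ G.Adj v w) (huS : u ∉ S) (hvS : v ∉ S)
    (g : Fin p ≃ {x // x ∈ S}) (i j : Fin (p+2)) :
    (G ⊔ fromEdgeSet {s(u,v)}).Adj (pageMap u v S g i) (pageMap u v S g j) ↔
      (i ≠ j ∧ (i.val < 2 ∨ j.val < 2)) := by
  rw [sup_adj, fromEdgeSet_adj, Set.mem_singleton_iff]
  constructor
  · intro hadj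
    constructor
    · rintro rfl
      rcases hadj with hadj | ⟨_, hadj⟩
      · exact absurd hadj (G.irrefl)
      · exact hadj rfl
    · by_contra hcon
      push_neg at hcon
      obtain ⟨hi2, hj2⟩ := hcon
      have hiS := pageMap_mem_S u v S g hi2
      have hjS := pageMap_mem_S u v S g hj2
      rcases hadj with hadj | ⟨hadj, _⟩
      · exact hG u _ _ (hcn _ hiS).1 (hcn _ hjS).1 hadj
      · rw [Sym2.eq_iff] at hadj
        rcases hadj with ⟨h', -⟩ | ⟨h', -⟩
        · exact huS (h' ▸ hiS)
        · exact hvS (h' ▸ hiS)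
  · rintro ⟨hij, hlt⟩
    rcases Nat.lt_or_ge i.val 2 with hi | hi
    · rcases Nat.lt_or_ge j.val 2 with hj | hj
      · have hvalne : i.val ≠ j.val := fun h => hij (Fin.ext h)
        have hi' : i.val = 0 ∨ i.val = 1 := by omega
        rcases hi' with hi' | hi'
        · right
          rw [pageMap_zero u v S g hi', pageMap_one u v S g (by omega)]
          exact ⟨rfl, hne⟩
        · right
          rw [pageMap_one u v S g hi', pageMap_zero u v S g (by omega)]
          exact ⟨Sym2.eq_swap, hne.symm⟩
      · left
        have hjS := pageMap_mem_S u v S g hj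
        have hi' : i.val = 0 ∨ i.val = 1 := by omega
        rcases hi' with hi' | hi'
        · rw [pageMap_zero u v S g hi']; exact (hcn _ hjS).1
        · rw [pageMap_one u v S g hi']; exact (hcn _ hjS).2
    · rcases Nat.lt_or_ge j.val 2 with hj | hj
      · left
        have hiS := pageMap_mem_S u v S g hi
        have hj' : j.val = 0 ∨ j.val = 1 := by omega
        rcases hj' with hj' | hj'
        · rw [pageMap_zero u v S g hj']; exact ((hcn _ hiS).1).symm
        · rw [pageMap_one u v S g hj']; exact ((hcn _ hiS).2).symm
      · omega

lemma isCopy_theCopy (hG : TriFree G) (hne : u ≠ v)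
    (hS : ↑S ⊆ G.commonNeighbors u v) (hcard : S.card = p) :
    IsCopy (book p) (theCopy G u v ↑S) := by
  classical
  have hcn : ∀ w ∈ S, G.Adj u w ∧ G.Adj v w := by
    intro w hw
    have := hS hw
    rw [SimpleGraph.mem_commonNeighbors] at this
    exact this
  have huS : u ∉ S := fun h => G.irrefl (hcn u h).1
  have hvS : v ∉ S := fun h => G.irrefl (hcn v h).2
  let g : Fin p ≃ {x // x ∈ S} := (S.equivFin.trans (finCongr hcard)).symm
  have memT : ∀ i : Fin (p+2),
      pageMap u v S g i ∈ (theCopy G u v ↑S).verts := by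
    intro i
    rw [theCopy_verts]
    rcases Nat.lt_or_ge i.val 2 with hi | hi
    · have hi' : i.val = 0 ∨ i.val = 1 := by omega
      rcases hi' with hi' | hi'
      · rw [pageMap_zero u v S g hi']; exact Set.mem_insert _ _
      · rw [pageMap_one u v S g hi']
        exact Set.mem_insert_of_mem _ (Set.mem_insert _ _)
    · exact Set.mem_insert_of_mem _ (Set.mem_insert_of_mem _
        (by simpa using pageMap_mem_S u v S g hi))
  have hbij : Function.Bijective
      (fun i : Fin (p+2) => (⟨pageMap u v S g i, memT i⟩ : (theCopy G u v ↑S).verts)) := by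
    constructor
    · intro i j hij
      exact pageMap_inj hne huS hvS g (congrArg Subtype.val hij)
    · rintro ⟨x, hx⟩
      rw [theCopy_verts] at hx
      obtain ⟨i, hi⟩ := pageMap_surj g hx
      exact ⟨i, Subtype.ext hi⟩
  refine ⟨SimpleGraph.Iso.symm ⟨Equiv.ofBijective _ hbij, ?_⟩⟩
  intro i j
  simp only [Equiv.ofBijective_apply]
  rw [Subgraph.coe_adj, book_adj]
  show (theCopy G u v ↑S).Adj (pageMap u v S g i) (pageMap u v S g j) ↔ _
  rw [theCopy_adj]
  constructor
  · rintro ⟨-, -, hadj⟩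
    exact (pageMap_adj hG hne hcn huS hvS g i j).1 hadj
  · intro h
    exact ⟨by have := memT i; rwa [theCopy_verts] at this,
      by have := memT j; rwa [theCopy_verts] at this,
      (pageMap_adj hG hne hcn huS hvS g i j).2 h⟩


lemma sup_triangle (hG : TriFree G)
    {x y z : V}
    (h1 : (G ⊔ fromEdgeSet {s(u,v)}).Adj x y)
    (h2 : (G ⊔ fromEdgeSet {s(u,v)}).Adj x z)
    (h3 : (G ⊔ fromEdgeSet {s(u,v)}).Adj y z) :
    (u = x ∨ u = y ∨ u = z) ∧ (v = x ∨ v = y ∨ v = z) := by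
  simp only [sup_adj, fromEdgeSet_adj, Set.mem_singleton_iff, Sym2.eq_iff] at h1 h2 h3
  rcases h1 with h1 | ⟨h1, _⟩
  · rcases h2 with h2 | ⟨h2, _⟩
    · rcases h3 with h3 | ⟨h3, _⟩
      · exact absurd h3 (fun hc => hG x y z h1 h2 hc)
      · tauto
    · tauto
  · tauto

lemma copy_eq (hp : 2 ≤ p) (hG : TriFree G) (hne : u ≠ v) (hnadj : ¬ G.Adj u v)
    {G' : (G ⊔ fromEdgeSet {s(u,v)}).Subgraph} (hc : IsCopy (book p) G') :
    ∃ S : Finset V, ↑S ⊆ G.commonNeighbors u v ∧ S.card = p ∧ G' = theCopy G u v ↑S := by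
  classical
  obtain ⟨f⟩ := hc
  set e := f.symm with he
  set F : Fin (p+2) → V := fun i => ↑(e i) with hF
  have hFinj : Function.Injective F := by
    intro i j hij
    exact e.injective (Subtype.ext hij)
  have hFadj : ∀ i j : Fin (p+2), G'.Adj (F i) (F j) ↔ (book p).Adj i j := by
    intro i j
    rw [← Subgraph.coe_adj]
    exact e.map_rel_iff
  have hFadj' : ∀ i j : Fin (p+2), i ≠ j → (i.val < 2 ∨ j.val < 2) → G'.Adj (F i) (F j) := by
    intro i j h1 h2
    exact (hFadj i j).2 ((book_adj i j).2 ⟨h1, h2⟩)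
  have hFverts : ∀ i, F i ∈ G'.verts := fun i => (e i).2
  have hvertsF : ∀ x ∈ G'.verts, ∃ i, F i = x := by
    intro x hx
    exact ⟨f ⟨x, hx⟩, by rw [hF]; simp [he]⟩
  have htri : ∀ i : Fin (p+2), 2 ≤ i.val →
      (u = F ⟨0, by omega⟩ ∨ u = F ⟨1, by omega⟩ ∨ u = F i) ∧
      (v = F ⟨0, by omega⟩ ∨ v = F ⟨1, by omega⟩ ∨ v = F i) := by
    intro i hi
    have h01 : G'.Adj (F ⟨0, by omega⟩) (F ⟨1, by omega⟩) :=
      hFadj' _ _ (by simp [Fin.ext_iff]) (by simp)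
    have h0i : G'.Adj (F ⟨0, by omega⟩) (F i) :=
      hFadj' _ _ (by simp [Fin.ext_iff]; omega) (by simp)
    have h1i : G'.Adj (F ⟨1, by omega⟩) (F i) :=
      hFadj' _ _ (by simp [Fin.ext_iff]; omega) (by simp)
    exact sup_triangle hG h01.adj_sub h0i.adj_sub h1i.adj_sub
  have h2le : (2:ℕ) < p + 2 := by omega
  have h3le : (3:ℕ) < p + 2 := by omega
  have key : ∀ w : V, (∀ i : Fin (p+2), 2 ≤ i.val →
      (w = F ⟨0, by omega⟩ ∨ w = F ⟨1, by omega⟩ ∨ w = F i)) →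
      w = F ⟨0, by omega⟩ ∨ w = F ⟨1, by omega⟩ := by
    intro w hw
    rcases hw ⟨2, h2le⟩ (by simp) with h | h | h
    · exact Or.inl h
    · exact Or.inr h
    · rcases hw ⟨3, h3le⟩ (by simp) with h' | h' | h'
      · exact Or.inl h'
      · exact Or.inr h'
      · exfalso
        rw [h'] at h
        exact absurd (hFinj h) (by simp [Fin.ext_iff])
  have hu01 : u = F ⟨0, by omega⟩ ∨ u = F ⟨1, by omega⟩ :=
    key u (fun i hi => (htri i hi).1)
  have hv01 : v = F ⟨0, by omega⟩ ∨ v = F ⟨1, by omega⟩ :=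
    key v (fun i hi => (htri i hi).2)
  obtain ⟨iu, hiu2, hiu⟩ : ∃ i : Fin (p+2), i.val < 2 ∧ F i = u := by
    rcases hu01 with h | h
    · exact ⟨⟨0, by omega⟩, by show 0 < 2; omega, h.symm⟩
    · exact ⟨⟨1, by omega⟩, by show 1 < 2; omega, h.symm⟩
  obtain ⟨iv, hiv2, hiv⟩ : ∃ i : Fin (p+2), i.val < 2 ∧ F i = v := by
    rcases hv01 with h | h
    · exact ⟨⟨0, by omega⟩, by show 0 < 2; omega, h.symm⟩
    · exact ⟨⟨1, by omega⟩, by show 1 < 2; omega, h.symm⟩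
  have hiuv : iu ≠ iv := by
    rintro rfl
    exact hne (hiu.symm.trans hiv)
  have hsmall : ∀ i : Fin (p+2), i.val < 2 → i = iu ∨ i = iv := by
    intro i hi
    by_cases h : i = iu
    · exact Or.inl h
    · have h1 : i.val ≠ iu.val := fun hh => h (Fin.ext hh)
      have h2 : iu.val ≠ iv.val := fun hh => hiuv (Fin.ext hh)
      exact Or.inr (Fin.ext (by omega))
  set S : Finset V := Finset.image (fun i : Fin p => F ⟨i.val + 2, by omega⟩) Finset.univ
    with hSdef
  have hmemS : ∀ x, x ∈ S ↔ ∃ i : Fin (p+2), 2 ≤ i.val ∧ F i = x := by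
    intro x
    rw [hSdef, Finset.mem_image]
    constructor
    · rintro ⟨i, -, rfl⟩
      exact ⟨⟨i.val + 2, by omega⟩, by simp, rfl⟩
    · rintro ⟨i, hi2, rfl⟩
      refine ⟨⟨i.val - 2, by omega⟩, Finset.mem_univ _, ?_⟩
      congr 1
      exact Fin.ext (by simp; omega)
  have hidx_ge : ∀ i : Fin (p+2), F i ∈ S → 2 ≤ i.val := by
    intro i hi
    obtain ⟨j, hj2, hj⟩ := (hmemS (F i)).1 hi
    have : j = i := hFinj hj
    omega
  have hScard : S.card = p := by
    rw [hSdef, Finset.card_image_of_injective _ ?hinj, Finset.card_univ, Fintype.card_fin]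
    case hinj =>
      intro i j hij
      have := hFinj hij
      rw [Fin.ext_iff] at this ⊢
      simpa using this
  have huS : u ∉ S := by
    intro h
    have := hidx_ge iu (hiu ▸ h)
    omega
  have hvS : v ∉ S := by
    intro h
    have := hidx_ge iv (hiv ▸ h)
    omega
  have hSsub : (↑S : Set V) ⊆ G.commonNeighbors u v := by
    intro x hx
    have hx' : x ∈ S := hx
    obtain ⟨i, hi2, rfl⟩ := (hmemS x).1 hx'
    have hGu' : G'.Adj (F iu) (F i) :=
      hFadj' iu i (fun h => by rw [h] at hiu2; omega) (Or.inl hiu2)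
    have hGv' : G'.Adj (F iv) (F i) :=
      hFadj' iv i (fun h => by rw [h] at hiv2; omega) (Or.inl hiv2)
    rw [hiu] at hGu'
    rw [hiv] at hGv'
    have hxu : F i ≠ u := by
      rw [← hiu]
      exact fun h => (by rw [hFinj h] at hi2; omega : False)
    have hxv : F i ≠ v := by
      rw [← hiv]
      exact fun h => (by rw [hFinj h] at hi2; omega : False)
    have h1 : G.Adj u (F i) := by
      have := hGu'.adj_sub
      rw [sup_adj, fromEdgeSet_adj, Set.mem_singleton_iff, Sym2.eq_iff] at this
      rcases this with h | ⟨h | h, -⟩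
      · exact h
      · exact absurd h.2 hxv
      · exact absurd h.1 hne
    have h2 : G.Adj v (F i) := by
      have := hGv'.adj_sub
      rw [sup_adj, fromEdgeSet_adj, Set.mem_singleton_iff, Sym2.eq_iff] at this
      rcases this with h | ⟨h | h, -⟩
      · exact h
      · exact absurd h.1 hne.symm
      · exact absurd h.2 hxu
    rw [SimpleGraph.mem_commonNeighbors]
    exact ⟨h1, h2⟩
  refine ⟨S, hSsub, hScard, ?_⟩
  have hverts : G'.verts = insert u (insert v (↑S : Set V)) := by
    ext x
    constructor
    · intro hx
      obtain ⟨i, rfl⟩ := hvertsF x hx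
      rcases Nat.lt_or_ge i.val 2 with hi | hi
      · rcases hsmall i hi with rfl | rfl
        · rw [hiu]; exact Set.mem_insert _ _
        · rw [hiv]; exact Set.mem_insert_of_mem _ (Set.mem_insert _ _)
      · exact Set.mem_insert_of_mem _ (Set.mem_insert_of_mem _
          (by exact_mod_cast (hmemS (F i)).2 ⟨i, hi, rfl⟩))
    · intro hx
      rcases hx with rfl | hx
      · have := hFverts iu; rwa [hiu] at this
      rcases hx with rfl | hx
      · have := hFverts iv; rwa [hiv] at this
      · have hx' : x ∈ S := by exact_mod_cast hx
        obtain ⟨i, -, rfl⟩ := (hmemS x).1 hx'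
        exact hFverts i
  have hAdj : ∀ x y, G'.Adj x y ↔ (theCopy G u v ↑S).Adj x y := by
    intro x y
    rw [theCopy_adj]
    constructor
    · intro h
      refine ⟨hverts ▸ h.fst_mem, hverts ▸ h.snd_mem, h.adj_sub⟩
    · rintro ⟨hx, hy, hadj⟩
      rw [← hverts] at hx hy
      obtain ⟨ix, rfl⟩ := hvertsF x hx
      obtain ⟨iy, rfl⟩ := hvertsF y hy
      have hne' : ix ≠ iy := fun h => hadj.ne (by rw [h])
      refine hFadj' ix iy hne' ?_
      by_contra hcon
      push_neg at hcon
      obtain ⟨hix, hiy⟩ := hcon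
      have hxS : F ix ∈ S := (hmemS _).2 ⟨ix, hix, rfl⟩
      have hyS : F iy ∈ S := (hmemS _).2 ⟨iy, hiy, rfl⟩
      rw [sup_adj, fromEdgeSet_adj, Set.mem_singleton_iff, Sym2.eq_iff] at hadj
      rcases hadj with h | ⟨h | h, -⟩
      · have h1 := ((SimpleGraph.mem_commonNeighbors G).1 (hSsub hxS)).1
        have h2 := ((SimpleGraph.mem_commonNeighbors G).1 (hSsub hyS)).1
        exact hG u (F ix) (F iy) h1 h2 h
      · exact huS (h.1 ▸ hxS)
      · exact hvS (h.1 ▸ hxS)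
  exact Subgraph.ext hverts (by funext x y; exact propext (hAdj x y))

end main

lemma triangle_of_copy {p : ℕ} (hp : 2 ≤ p) {K : SimpleGraph V} {G' : K.Subgraph}
    (h : IsCopy (book p) G') : ∃ x y z : V, K.Adj x y ∧ K.Adj x z ∧ K.Adj y z := by
  obtain ⟨f⟩ := h
  set e := f.symm with he
  have key : ∀ i j : Fin (p+2), (book p).Adj i j → K.Adj (e i) (e j) := by
    intro i j hij
    have h2 : G'.coe.Adj (e i) (e j) := e.map_rel_iff.2 hij
    rw [Subgraph.coe_adj] at h2
    exact h2.adj_sub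
  refine ⟨e ⟨0, by omega⟩, e ⟨1, by omega⟩, e ⟨2, by omega⟩, ?_, ?_, ?_⟩ <;>
    refine key _ _ ((book_adj _ _).2 ⟨?_, ?_⟩) <;>
      simp [Fin.ext_iff]

section girthsec
variable {G : SimpleGraph V}

lemma egirth_le_of_cycle {a : V} {w : G.Walk a a} (hw : w.IsCycle) :
    G.egirth ≤ w.length := by
  rw [egirth]
  exact iInf_le_of_le a (iInf_le_of_le w (iInf_le _ hw))

lemma triangle_cycle {x y z : V} (hxy : G.Adj x y) (hxz : G.Adj x z) (hyz : G.Adj y z) :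
    ∃ (a : V) (w : G.Walk a a), w.IsCycle ∧ w.length = 3 := by
  have n1 : x ≠ y := hxy.ne
  have n2 : x ≠ z := hxz.ne
  have n3 : y ≠ z := hyz.ne
  refine ⟨x, Walk.cons hxy (Walk.cons hyz (Walk.cons hxz.symm Walk.nil)), ?_, by simp⟩
  rw [Walk.cons_isCycle_iff]
  constructor
  · simp [Walk.cons_isPath_iff, n1, n2, n3, n1.symm, n2.symm, n3.symm]
  · simp [Sym2.eq_iff, n1, n2, n3, n1.symm, n2.symm, n3.symm]

lemma three_cycle_triangle {a : V} (w : G.Walk a a) (h3 : w.length = 3) :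
    ∃ x y z : V, G.Adj x y ∧ G.Adj x z ∧ G.Adj y z := by
  cases w with
  | nil => simp at h3
  | cons h1 q =>
    cases q with
    | nil => simp at h3
    | cons h2 q2 =>
      cases q2 with
      | nil => simp at h3
      | cons h3' q3 =>
        cases q3 with
        | nil => exact ⟨_, _, _, h1, h3'.symm, h2⟩
        | cons h4 q4 => simp [Walk.length_cons] at h3

lemma triFree_of_girth_eq_four (h : G.girth = 4) : TriFree G := by
  intro x y z hxy hxz hyz
  obtain ⟨a, w, hc, hl⟩ := triangle_cycle hxy hxz hyz
  have h1 : G.egirth ≤ 3 := by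
    have := egirth_le_of_cycle hc
    rwa [hl] at this
  have h2 : G.egirth = 3 := le_antisymm h1 three_le_egirth
  rw [girth, h2] at h
  simp at h

lemma girth_eq_four_of (htf : TriFree G) {a : V} {w : G.Walk a a}
    (hc : w.IsCycle) (h4 : w.length = 4) : G.girth = 4 := by
  have hle : G.egirth ≤ 4 := by
    have := egirth_le_of_cycle hc
    rwa [h4] at this
  have hge : (4 : ℕ∞) ≤ G.egirth := by
    rw [le_egirth]
    intro b w' hw'
    have h3 : 3 ≤ w'.length := hw'.three_le_length
    rcases Nat.lt_or_ge w'.length 4 with h | h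
    · exfalso
      have : w'.length = 3 := by omega
      obtain ⟨x, y, z, h1, h2, h3⟩ := three_cycle_triangle w' this
      exact htf x y z h1 h2 h3
    · exact_mod_cast h
  have : G.egirth = 4 := le_antisymm hle hge
  rw [girth, this]
  rfl

lemma girth_eq_four' (htf : TriFree G) {u v w1 w2 : V} (hne : u ≠ v)
    (h1 : G.Adj u w1) (h2 : G.Adj v w1) (h3 : G.Adj u w2) (h4 : G.Adj v w2)
    (hw : w1 ≠ w2) : G.girth = 4 := by
  have n1 : u ≠ w1 := h1.ne
  have n2 : u ≠ w2 := h3.ne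
  have n3 : v ≠ w1 := h2.ne
  have n4 : v ≠ w2 := h4.ne
  refine girth_eq_four_of htf (a := u)
    (w := Walk.cons h1 (Walk.cons h2.symm (Walk.cons h4 (Walk.cons h3.symm Walk.nil)))) ?_ (by simp)
  rw [Walk.cons_isCycle_iff]
  constructor
  · simp [Walk.cons_isPath_iff, hne, hw, n1, n2, n3, n4, hne.symm, hw.symm,
      n1.symm, n2.symm, n3.symm, n4.symm]
  · simp [Sym2.eq_iff, hne, hw, n1, n2, n3, n4, hne.symm, hw.symm,
      n1.symm, n2.symm, n3.symm, n4.symm]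


end girthsec

section regsec
variable [Fintype V] {G : SimpleGraph V} [DecidableRel G.Adj]

lemma degree_eq_of_adj {p : ℕ} (hp : 2 ≤ p) (htf : TriFree G)
    (hμ : ∀ x y : V, x ≠ y → ¬ G.Adj x y → Fintype.card (G.commonNeighbors x y) = p)
    {x y : V} (hxy : G.Adj x y) : G.degree x = G.degree y := by
  classical
  set A := G.neighborFinset x \ {y} with hA
  set B := G.neighborFinset y \ {x} with hB
  have key : ∀ w ∈ A, (B.filter (fun z => G.Adj w z)).card = p - 1 := by
    intro w hw
    rw [hA, Finset.mem_sdiff, mem_neighborFinset, Finset.mem_singleton] at hw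
    obtain ⟨hxw, hwy⟩ := hw
    have hnadj : ¬ G.Adj w y := fun h => htf x w y hxw hxy h
    have hcnt := hμ w y hwy hnadj
    have heq : B.filter (fun z => G.Adj w z) = (G.commonNeighbors w y).toFinset.erase x := by
      ext z
      simp only [hB, Finset.mem_filter, Finset.mem_sdiff, mem_neighborFinset,
        Finset.mem_singleton, Finset.mem_erase, Set.mem_toFinset,
        SimpleGraph.mem_commonNeighbors]
      tauto
    rw [heq, Finset.card_erase_of_mem (by
      simp only [Set.mem_toFinset, SimpleGraph.mem_commonNeighbors]
      exact ⟨hxw.symm, hxy.symm⟩), Set.toFinset_card, hcnt]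
  have key' : ∀ z ∈ B, (A.filter (fun w => G.Adj w z)).card = p - 1 := by
    intro z hz
    rw [hB, Finset.mem_sdiff, mem_neighborFinset, Finset.mem_singleton] at hz
    obtain ⟨hyz, hzx⟩ := hz
    have hnadj : ¬ G.Adj z x := fun h => htf y z x hyz hxy.symm h
    have hcnt := hμ z x hzx hnadj
    have heq : A.filter (fun w => G.Adj w z) = (G.commonNeighbors z x).toFinset.erase y := by
      ext w
      simp only [hA, Finset.mem_filter, Finset.mem_sdiff, mem_neighborFinset,
        Finset.mem_singleton, Finset.mem_erase, Set.mem_toFinset,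
        SimpleGraph.mem_commonNeighbors]
      constructor
      · rintro ⟨⟨h1, h2⟩, h3⟩
        exact ⟨h2, h3.symm, h1⟩
      · rintro ⟨h1, h2, h3⟩
        exact ⟨⟨h3, h1⟩, h2.symm⟩
    rw [heq, Finset.card_erase_of_mem (by
      simp only [Set.mem_toFinset, SimpleGraph.mem_commonNeighbors]
      exact ⟨hyz.symm, hxy⟩), Set.toFinset_card, hcnt]
  have hdouble : A.card * (p - 1) = B.card * (p - 1) := by
    have h1 : ∑ w ∈ A, (B.filter (fun z => G.Adj w z)).card
        = ∑ z ∈ B, (A.filter (fun w => G.Adj w z)).card := by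
      simp only [Finset.card_filter]
      exact Finset.sum_comm
    rw [Finset.sum_congr rfl key, Finset.sum_congr rfl key'] at h1
    simpa [Finset.sum_const, mul_comm] using h1
  have hAcard : A.card = G.degree x - 1 := by
    rw [hA, Finset.card_sdiff_of_subset (by simp [hxy]), Finset.card_singleton, degree]
  have hBcard : B.card = G.degree y - 1 := by
    rw [hB, Finset.card_sdiff_of_subset (by simp [hxy.symm]), Finset.card_singleton, degree]
  have hdx : 1 ≤ G.degree x := by
    rw [← card_neighborFinset_eq_degree]
    exact Finset.card_pos.2 ⟨y, by simp [hxy]⟩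
  have hdy : 1 ≤ G.degree y := by
    rw [← card_neighborFinset_eq_degree]
    exact Finset.card_pos.2 ⟨x, by simp [hxy.symm]⟩
  have hp1 : 0 < p - 1 := by omega
  have := Nat.eq_of_mul_eq_mul_right hp1 hdouble
  omega


end regsec

end Stmt16Aux

open Stmt16Aux in
theorem stmt16 {V : Type*} [Fintype V] (G : SimpleGraph V) [DecidableRel G.Adj]
    (p : ℕ) (hp : 2 ≤ p) :
    (UniquelySaturated (book p) G ∧ p + 2 ≤ Fintype.card V ∧ G.girth = 4) ↔
      (∃ k : ℕ, G.IsSRGWith (Fintype.card V) k 0 p ∧ G ≠ ⊤ ∧ G ≠ ⊥) := by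
  classical
  constructor
  · rintro ⟨⟨hfree, hsat⟩, hcardV, hgirth⟩
    have htf : TriFree G := triFree_of_girth_eq_four hgirth
    have hμ : ∀ u v : V, u ≠ v → ¬ G.Adj u v →
        Fintype.card (G.commonNeighbors u v) = p := by
      intro u v hne hnadj
      obtain ⟨G', hc, huniq⟩ := hsat u v hne hnadj
      obtain ⟨S, hSsub, hScard, rfl⟩ := copy_eq hp htf hne hnadj hc
      have hle : p ≤ (G.commonNeighbors u v).toFinset.card := by
        rw [← hScard]
        exact Finset.card_le_card (fun z hz => Set.mem_toFinset.2 (hSsub hz))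
      have hge : (G.commonNeighbors u v).toFinset.card ≤ p := by
        by_contra hcon
        push_neg at hcon
        obtain ⟨T, hTsub, hTcard⟩ := Finset.exists_subset_card_eq (Nat.succ_le_of_lt hcon)
        obtain ⟨a, ha, b, hb, hab⟩ := Finset.one_lt_card.1 (by omega : 1 < T.card)
        have hsub : ∀ c : V, (↑(T.erase c) : Set V) ⊆ G.commonNeighbors u v := by
          intro c z hz
          have : z ∈ T.erase c := hz
          exact Set.mem_toFinset.1 (hTsub (Finset.mem_of_mem_erase this))
        have hcarda : (T.erase a).card = p := by
          rw [Finset.card_erase_of_mem ha, hTcard]; omega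
        have hcardb : (T.erase b).card = p := by
          rw [Finset.card_erase_of_mem hb, hTcard]; omega
        have hca := isCopy_theCopy htf hne (hsub a) hcarda
        have hcb := isCopy_theCopy htf hne (hsub b) hcardb
        have hea := huniq _ hca
        have heb := huniq _ hcb
        have heq : theCopy G u v ↑(T.erase a) = theCopy G u v ↑(T.erase b) :=
          hea.trans heb.symm
        have hverts := congrArg Subgraph.verts heq
        rw [theCopy_verts, theCopy_verts] at hverts
        have haN : a ∈ G.commonNeighbors u v := Set.mem_toFinset.1 (hTsub ha)
        have hau : a ≠ u := fun h => G.notMem_commonNeighbors_left u v (h ▸ haN)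
        have hav : a ≠ v := fun h => G.notMem_commonNeighbors_right u v (h ▸ haN)
        have hmem : a ∈ insert u (insert v (↑(T.erase b) : Set V)) := by
          right; right
          exact_mod_cast Finset.mem_erase.2 ⟨hab, ha⟩
        rw [← hverts] at hmem
        rcases hmem with h | h | h
        · exact hau h
        · exact hav h
        · have : a ∈ T.erase a := by exact_mod_cast h
          exact (Finset.mem_erase.1 this).1 rfl
      have := le_antisymm hge hle
      rwa [Set.toFinset_card] at this
    have hdeq : ∀ a b : V, G.Adj a b → G.degree a = G.degree b :=
      fun a b => degree_eq_of_adj hp htf hμ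
    have hNV : Nonempty V := Fintype.card_pos_iff.1 (by omega)
    obtain ⟨v0⟩ := hNV
    refine ⟨G.degree v0, ?_, ?_, ?_⟩
    · refine ⟨rfl, ?_, ?_, ?_⟩
      · intro x
        rcases eq_or_ne x v0 with rfl | hxv
        · rfl
        by_cases hadj : G.Adj x v0
        · exact hdeq x v0 hadj
        · have hpos : 0 < Fintype.card (G.commonNeighbors x v0) := by
            rw [hμ x v0 hxv hadj]; omega
          obtain ⟨⟨w, hw⟩⟩ := Fintype.card_pos_iff.1 hpos
          have h1 : G.Adj x w := hw.1
          have h2 : G.Adj v0 w := hw.2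
          exact (hdeq x w h1).trans (hdeq w v0 h2.symm)
      · intro a b hab
        rw [Fintype.card_eq_zero_iff]
        exact ⟨fun z => htf a b z hab z.2.1 z.2.2⟩
      · intro a b hab hnadj
        exact hμ a b hab hnadj
    · intro h
      obtain ⟨x, y, hxy⟩ := Fintype.exists_pair_of_one_lt_card (by omega : 1 < Fintype.card V)
      have hlt : ({x, y} : Finset V).card < Fintype.card V := by
        have h2 : ({x, y} : Finset V).card ≤ 2 := Finset.card_le_two
        omega
      have hnon : (Finset.univ \ ({x, y} : Finset V)).Nonempty := by
        rw [← Finset.card_pos, Finset.card_sdiff_of_subset (Finset.subset_univ _), Finset.card_univ]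
        omega
      obtain ⟨z, hz⟩ := hnon
      rw [Finset.mem_sdiff, Finset.mem_insert, Finset.mem_singleton] at hz
      push_neg at hz
      obtain ⟨-, hzx, hzy⟩ := hz
      subst h
      exact htf x y z (by simp [hxy]) (by simp [hzx.symm]) (by simp [hzy.symm])
    · intro h
      subst h
      rw [girth_bot] at hgirth
      exact absurd hgirth (by omega)
  · rintro ⟨k, hsrg, hnetop, hnebot⟩
    have htf : TriFree G := by
      intro x y z hxy hxz hyz
      have h0 := hsrg.of_adj x y hxy
      rw [Fintype.card_eq_zero_iff] at h0
      exact h0.elim ⟨z, (G.mem_commonNeighbors).2 ⟨hxz, hyz⟩⟩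
    have hμ : ∀ u v : V, u ≠ v → ¬ G.Adj u v →
        Fintype.card (G.commonNeighbors u v) = p :=
      fun u v hne hnadj => hsrg.of_not_adj hne hnadj
    obtain ⟨u0, v0, hne0, hnadj0⟩ : ∃ u v : V, u ≠ v ∧ ¬ G.Adj u v := by
      by_contra hcon
      push_neg at hcon
      apply hnetop
      ext a b
      rw [top_adj]
      exact ⟨fun h => h.ne, fun h => hcon a b h⟩
    have hNcard : (G.commonNeighbors u0 v0).toFinset.card = p := by
      rw [Set.toFinset_card]; exact hμ u0 v0 hne0 hnadj0
    have hu0N : u0 ∉ (G.commonNeighbors u0 v0).toFinset := by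
      rw [Set.mem_toFinset]; exact G.notMem_commonNeighbors_left u0 v0
    have hv0N : v0 ∉ (G.commonNeighbors u0 v0).toFinset := by
      rw [Set.mem_toFinset]; exact G.notMem_commonNeighbors_right u0 v0
    have hcardV : p + 2 ≤ Fintype.card V := by
      have h1 : (insert u0 (insert v0 (G.commonNeighbors u0 v0).toFinset)).card = p + 2 := by
        rw [Finset.card_insert_of_notMem (by simp [hne0, hu0N]),
          Finset.card_insert_of_notMem hv0N, hNcard]
      calc p + 2 = (insert u0 (insert v0 (G.commonNeighbors u0 v0).toFinset)).card := h1.symm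
        _ ≤ Fintype.card V := Finset.card_le_univ _
    refine ⟨⟨?_, ?_⟩, hcardV, ?_⟩
    · intro G' hc
      obtain ⟨x, y, z, h1, h2, h3⟩ := triangle_of_copy hp hc
      exact htf x y z h1 h2 h3
    · intro u v hne hnadj
      set S := (G.commonNeighbors u v).toFinset with hS
      have hSsub : (↑S : Set V) ⊆ G.commonNeighbors u v := by
        rw [hS, Set.coe_toFinset]
      have hScard : S.card = p := by
        rw [hS, Set.toFinset_card]; exact hμ u v hne hnadj
      refine ⟨theCopy G u v ↑S, isCopy_theCopy htf hne hSsub hScard, ?_⟩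
      intro G' hc
      obtain ⟨S', hS'sub, hS'card, rfl⟩ := copy_eq hp htf hne hnadj hc
      have hss : S' = S := Finset.eq_of_subset_of_card_le
        (fun z hz => Set.mem_toFinset.2 (hS'sub hz)) (by rw [hScard, hS'card])
      rw [hss]
    · have hpos : 1 < Fintype.card (G.commonNeighbors u0 v0) := by
        rw [hμ u0 v0 hne0 hnadj0]; omega
      obtain ⟨⟨w1, hw1⟩, ⟨w2, hw2⟩, hw⟩ := Fintype.exists_pair_of_one_lt_card hpos
      have hww : w1 ≠ w2 := fun h => hw (Subtype.ext h)
      exact girth_eq_four' htf hne0 hw1.1 hw1.2 hw2.1 hw2.2 hww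
end

section
/- Any strongly regular graph with parameters (n, k, q, p) where q <= p - 2 is uniquely B_p-saturated. -/
open SimpleGraph

/-!
In a strongly regular graph with parameters `(n, k, q, p)`, `q ≤ p - 2`, every edge has `q < p`
common neighbours, so there is no `B_p`. Adding a non-edge `uv` creates the book with spine `uv`
whose pages are the `p` common neighbours of `u` and `v`. The spine `ab` of any copy of `B_p` in
`G + uv` must be `uv`: otherwise `ab` is an edge of `G`, and adding a single edge gives it at most
one new common neighbour, hence at most `q + 1 < p` of them. The `p` pages of such a copy then
exhaust the common neighbours of `u` and `v`, so the copy is the one above.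
-/
lemma book_adj {p : ℕ} {i j : Fin (p + 2)} :
    (book p).Adj i j ↔ i ≠ j ∧ (i ∈ s(0, 1) ∨ j ∈ s(0, 1)) := by
  have h2 : ∀ k : Fin (p + 2), k.val < 2 ↔ k ∈ s(0, 1) := fun k => by
    simp only [Sym2.mem_iff, Fin.ext_iff, Fin.val_zero, Fin.val_one]
    omega
  simp only [book, fromRel_adj, h2]
  tauto

lemma isCopy_iff_exists_copy {W V : Type*} {H : SimpleGraph W} {K : SimpleGraph V}
    {G' : K.Subgraph} : IsCopy H G' ↔ ∃ f : Copy H K, f.toSubgraph = G' := by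
  rw [← Set.mem_range, Copy.range_toSubgraph, Set.mem_ofPred_eq]
  exact ⟨fun ⟨e⟩ => ⟨e.symm⟩, fun ⟨e⟩ => ⟨e.symm⟩⟩

namespace SimpleGraph

variable {V : Type*}

namespace Copy

variable {K : SimpleGraph V} {p : ℕ}

def bookPages (f : Copy (book p) K) (t : Fin p) : V := f t.succ.succ

def ofCommonNeighbors {a b : V} (hab : K.Adj a b) (g : Fin p ↪ K.commonNeighbors a b) :
    Copy (book p) K where
  toHom.toFun := Fin.cons a (Fin.cons b (Subtype.val ∘ g))
  toHom.map_rel' := by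
    have hg := fun t => (mem_commonNeighbors K).1 (g t).2
    intro i j hij
    have hcases : ∀ k : Fin (p + 2), k = 0 ∨ k = 1 ∨ ∃ t : Fin p, k = t.succ.succ := fun k => by
      rcases k.eq_zero_or_eq_succ with rfl | ⟨k, rfl⟩
      · exact Or.inl rfl
      rcases k.eq_zero_or_eq_succ with rfl | ⟨t, rfl⟩
      exacts [Or.inr (Or.inl Fin.succ_zero_eq_one), Or.inr (Or.inr ⟨t, rfl⟩)]
    rcases hcases i with rfl | rfl | ⟨s, rfl⟩ <;> rcases hcases j with rfl | rfl | ⟨t, rfl⟩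
    all_goals simp_all [book_adj, eq_comm, Fin.succ_succ_ne_one, adj_comm]
  injective' := by
    have hpages : Set.range (Subtype.val ∘ g) ⊆ K.commonNeighbors a b :=
      Set.range_subset_iff.2 fun t => (g t).2
    refine Fin.cons_injective_iff.2 ⟨?_, Fin.cons_injective_iff.2
      ⟨fun h => K.notMem_commonNeighbors_right a b (hpages h),
        Subtype.val_injective.comp g.injective⟩⟩
    rw [Fin.range_cons, Set.mem_insert_iff, not_or]
    exact ⟨hab.ne, fun h => K.notMem_commonNeighbors_left a b (hpages h)⟩

variable (f : Copy (book p) K)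

lemma adj_book_spine : K.Adj (f 0) (f 1) :=
  f.toHom.map_adj (by simp [book_adj])

lemma bookPages_mem_commonNeighbors (t : Fin p) :
    f.bookPages t ∈ K.commonNeighbors (f 0) (f 1) :=
  (mem_commonNeighbors K).2
    ⟨f.toHom.map_adj (by simp [book_adj, eq_comm]),
      f.toHom.map_adj (by simp [book_adj, eq_comm, Fin.succ_succ_ne_one])⟩

lemma bookPages_injective : Function.Injective f.bookPages :=
  f.injective.comp ((Fin.succ_injective _).comp (Fin.succ_injective _))

lemma range_book : Set.range f = insert (f 0) (insert (f 1) (Set.range f.bookPages)) := by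
  rw [Fin.range_fin_succ, Fin.range_fin_succ]
  rfl

lemma le_ncard_commonNeighbors [Finite V] : p ≤ (K.commonNeighbors (f 0) (f 1)).ncard :=
  calc p = (Set.range f.bookPages).ncard := by
        rw [Set.ncard_range_of_injective f.bookPages_injective, Nat.card_fin]
    _ ≤ _ := Set.ncard_le_ncard (Set.range_subset_iff.2 f.bookPages_mem_commonNeighbors)

lemma toSubgraph_adj_book {x y : V} :
    f.toSubgraph.Adj x y ↔ x ≠ y ∧ x ∈ Set.range f ∧ y ∈ Set.range f ∧
      (x ∈ s(f 0, f 1) ∨ y ∈ s(f 0, f 1)) := by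
  have hspine : ∀ i, f i ∈ s(f 0, f 1) ↔ i ∈ s(0, 1) := fun i => by
    have hinj : Function.Injective f := f.injective
    simp only [Sym2.mem_iff, hinj.eq_iff]
  simp only [Subgraph.map_adj, Relation.Map, Subgraph.top_adj, book_adj, coe_toHom]
  constructor
  · rintro ⟨i, j, ⟨hij, hmem⟩, rfl, rfl⟩
    exact ⟨f.injective.ne hij, ⟨i, rfl⟩, ⟨j, rfl⟩, by simpa only [hspine] using hmem⟩
  · rintro ⟨hxy, ⟨i, rfl⟩, ⟨j, rfl⟩, hmem⟩
    exact ⟨i, j, ⟨ne_of_apply_ne _ hxy, by simpa only [hspine] using hmem⟩, rfl, rfl⟩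

lemma toSubgraph_book_eq {f g : Copy (book p) K} (hspine : s(f 0, f 1) = s(g 0, g 1))
    (hpages : Set.range f.bookPages = Set.range g.bookPages) : f.toSubgraph = g.toSubgraph := by
  have hrange : Set.range f = Set.range g := by
    rw [range_book, range_book, hpages]
    rcases Sym2.eq_iff.1 hspine with ⟨h0, h1⟩ | ⟨h0, h1⟩
    · rw [h0, h1]
    · rw [h0, h1, Set.insert_comm]
  ext x y
  · simp only [Subgraph.map_verts, Subgraph.verts_top, Set.image_univ, coe_toHom, hrange]
  · simp only [toSubgraph_adj_book, hrange, hspine]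

end Copy

lemma book_isContained_iff [Finite V] {K : SimpleGraph V} {p : ℕ} :
    book p ⊑ K ↔ ∃ a b, K.Adj a b ∧ p ≤ (K.commonNeighbors a b).ncard := by
  refine ⟨fun ⟨f⟩ => ⟨f 0, f 1, f.adj_book_spine, f.le_ncard_commonNeighbors⟩, ?_⟩
  rintro ⟨a, b, hab, hp⟩
  have := Fintype.ofFinite V
  classical
  obtain ⟨g⟩ : Nonempty (Fin p ↪ K.commonNeighbors a b) := Function.Embedding.nonempty_of_card_le
    (by rwa [Fintype.card_fin, ← Set.toFinset_card, ← Set.ncard_eq_toFinset_card'])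
  exact ⟨Copy.ofCommonNeighbors hab g⟩

variable {G : SimpleGraph V} {u v a b : V}

lemma adj_of_sup_edge_adj (h : (G ⊔ edge u v).Adj a b) (hne : s(a, b) ≠ s(u, v)) : G.Adj a b :=
  h.resolve_right fun h' => hne ((adj_edge _ _).1 h').1.symm

lemma commonNeighbors_sup_edge_self :
    (G ⊔ edge u v).commonNeighbors u v = G.commonNeighbors u v := by
  ext w
  refine ⟨fun h => ?_, fun h => ?_⟩
  · obtain ⟨hu, hv⟩ := (mem_commonNeighbors _).1 h
    have hwu : w ≠ u := hu.ne.symm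
    have hwv : w ≠ v := hv.ne.symm
    exact (mem_commonNeighbors _).2 ⟨adj_of_sup_edge_adj hu (by simp [hwu, hwv]),
      adj_of_sup_edge_adj hv (by simp [hwu, hwv])⟩
  · obtain ⟨hu, hv⟩ := (mem_commonNeighbors _).1 h
    exact (mem_commonNeighbors _).2 ⟨Or.inl hu, Or.inl hv⟩

lemma ncard_commonNeighbors_sup_edge_le [Finite V] :
    ((G ⊔ edge u v).commonNeighbors a b).ncard ≤ (G.commonNeighbors a b).ncard + 1 := by
  have hsub : ((G ⊔ edge u v).commonNeighbors a b \ G.commonNeighbors a b).Subsingleton := by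
    have hnew : ∀ x ∈ (G ⊔ edge u v).commonNeighbors a b \ G.commonNeighbors a b,
        x ≠ a ∧ x ≠ b ∧ (s(u, v) = s(a, x) ∨ s(u, v) = s(b, x)) := by
      rintro x ⟨hx, hxG⟩
      obtain ⟨ha, hb⟩ := (mem_commonNeighbors _).1 hx
      refine ⟨ha.ne.symm, hb.ne.symm, ?_⟩
      by_contra! h
      exact hxG ((mem_commonNeighbors _).2
        ⟨adj_of_sup_edge_adj ha (Ne.symm h.1), adj_of_sup_edge_adj hb (Ne.symm h.2)⟩)
    intro x hx y hy
    have hx' := hnew x hx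
    have hy' := hnew y hy
    simp only [Sym2.eq_iff] at hx' hy'
    -- if `x ≠ y` then, up to symmetry, `s(a, x) = s(u, v) = s(b, y)`, forcing `x = b`
    grind
  have := Set.ncard_le_ncard_sdiff_add_ncard ((G ⊔ edge u v).commonNeighbors a b)
    (G.commonNeighbors a b)
  have := Set.ncard_le_one_iff_subsingleton.2 hsub
  omega

namespace Copy

variable {p : ℕ} [Finite V]

lemma spine_eq_of_sup_edge (hsparse : ∀ a b, G.Adj a b → (G.commonNeighbors a b).ncard + 2 ≤ p)
    (f : Copy (book p) (G ⊔ edge u v)) : s(f 0, f 1) = s(u, v) := by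
  by_contra hne
  have := f.le_ncard_commonNeighbors
  have : ((G ⊔ edge u v).commonNeighbors (f 0) (f 1)).ncard ≤
      (G.commonNeighbors (f 0) (f 1)).ncard + 1 := ncard_commonNeighbors_sup_edge_le
  have := hsparse _ _ (adj_of_sup_edge_adj f.adj_book_spine hne)
  omega

lemma range_bookPages_of_sup_edge
    (hsparse : ∀ a b, G.Adj a b → (G.commonNeighbors a b).ncard + 2 ≤ p)
    (hp : (G.commonNeighbors u v).ncard = p) (f : Copy (book p) (G ⊔ edge u v)) :
    Set.range f.bookPages = G.commonNeighbors u v := by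
  have hsub : Set.range f.bookPages ⊆ (G ⊔ edge u v).commonNeighbors u v := by
    have h := Set.range_subset_iff.2 f.bookPages_mem_commonNeighbors
    rcases Sym2.eq_iff.1 (f.spine_eq_of_sup_edge hsparse) with ⟨h0, h1⟩ | ⟨h0, h1⟩
    · rwa [h0, h1] at h
    · rwa [h0, h1, commonNeighbors_symm] at h
  rw [commonNeighbors_sup_edge_self] at hsub
  exact Set.eq_of_subset_of_ncard_le hsub
    (by rw [hp, Set.ncard_range_of_injective f.bookPages_injective, Nat.card_fin])

end Copy

end SimpleGraph

theorem stmt17_general {V : Type*} [Fintype V] (G : SimpleGraph V) [DecidableRel G.Adj]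
    (n k q p : ℕ) (hq : q + 2 ≤ p)
    (hsrg : G.IsSRGWith n k q p) :
    UniquelySaturated (book p) G := by
  have hncard : ∀ a b, (G.commonNeighbors a b).ncard = Fintype.card (G.commonNeighbors a b) :=
    fun a b => by rw [Set.ncard_eq_toFinset_card', Set.toFinset_card]
  have hsparse : ∀ a b, G.Adj a b → (G.commonNeighbors a b).ncard + 2 ≤ p := fun a b hab => by
    rwa [hncard, hsrg.of_adj a b hab]
  refine ⟨fun G' hG' => ?_, fun u v huv hnadj => ?_⟩
  · obtain ⟨f, -⟩ := isCopy_iff_exists_copy.1 hG'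
    have := f.le_ncard_commonNeighbors
    have := hsparse _ _ f.adj_book_spine
    omega
  · have hp : (G.commonNeighbors u v).ncard = p := by rw [hncard, hsrg.of_not_adj huv hnadj]
    show ∃! G' : (G ⊔ edge u v).Subgraph, IsCopy (book p) G'
    obtain ⟨f⟩ : book p ⊑ G ⊔ edge u v := book_isContained_iff.2
      ⟨u, v, Or.inr ((edge_adj _ _ _ _).2 ⟨Or.inl ⟨rfl, rfl⟩, huv⟩),
        by rw [commonNeighbors_sup_edge_self, hp]⟩
    refine ⟨f.toSubgraph, isCopy_iff_exists_copy.2 ⟨f, rfl⟩, fun G' hG' => ?_⟩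
    obtain ⟨g, rfl⟩ := isCopy_iff_exists_copy.1 hG'
    exact Copy.toSubgraph_book_eq
      (by rw [g.spine_eq_of_sup_edge hsparse, f.spine_eq_of_sup_edge hsparse])
      (by rw [g.range_bookPages_of_sup_edge hsparse hp, f.range_bookPages_of_sup_edge hsparse hp])

theorem stmt17 {V : Type*} [Fintype V] (G : SimpleGraph V) [DecidableRel G.Adj]
    (n k q p : ℕ) (hq : q + 2 ≤ p)
    (hsrg : G.IsSRGWith n k q p) (hnc : G ≠ ⊤) (hne : G ≠ ⊥) :
    UniquelySaturated (book p) G :=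
  stmt17_general G n k q p hq hsrg
end
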